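/- Let E be a directed graph and A = KE its path algebra over a field K. Then the left socle of A equals the direct sum ⊕_{v ∈ Source(E)} vA, i.e., the two-sided ideal generated by the sources of E, and the right socle equals ⊕_{v ∈ Sink(E)} Av, the two-sided ideal generated by the sinks. -/

import Mathlib

/-- A directed graph: vertices, edges, source and range maps. -/
structure DGraph : Type 1 where
  V : Type
  Edge : Type
  s : Edge → V
  r : Edge → V

namespace DGraph

/-- A list of edges is composable if consecutive edges match up. -/
def IsComposable (G : DGraph) (l : List G.Edge) : Prop :=
  l.Chain' (fun e f => G.r e = G.s f)

/-- A path in `G`: either a trivial path at a vertex, or a nonempty composable list of edges. -/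
def GPath (G : DGraph) : Type :=
  G.V ⊕ {l : List G.Edge // l ≠ [] ∧ G.IsComposable l}

namespace GPath

variable {G : DGraph}

/-- The source of a path. -/
def src : GPath G → G.V
  | Sum.inl v => v
  | Sum.inr l => G.s (l.1.head l.2.1)

/-- The range of a path. -/
def rng : GPath G → G.V
  | Sum.inl v => v
  | Sum.inr l => G.r (l.1.getLast l.2.1)

/-- The length of a path. -/
def length : GPath G → ℕ
  | Sum.inl _ => 0
  | Sum.inr l => l.1.length

/-- The trivial path at a vertex. -/
def ofVertex (v : G.V) : GPath G := Sum.inl v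

/-- The length-one path given by an edge. -/
def ofEdge (e : G.Edge) : GPath G :=
  Sum.inr ⟨[e], by simp [IsComposable, List.Chain', List.isChain_singleton]⟩

/-- Concatenation of composable paths. -/
def comp : (p q : GPath G) → p.rng = q.src → GPath G
  | Sum.inl _, q, _ => q
  | Sum.inr l, Sum.inl _, _ => Sum.inr l
  | Sum.inr l, Sum.inr m, h => Sum.inr ⟨l.1 ++ m.1, by
      refine ⟨by simp [l.2.1], l.2.2.append m.2.2 ?_⟩
      intro x hx y hy
      rw [List.getLast?_eq_some_getLast l.2.1] at hx
      rw [List.head?_eq_head m.2.1] at hy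
      cases hx
      cases hy
      exact h⟩

end GPath

end DGraph

open DGraph

/-- A realization of the path algebra of the graph `G` over the field `K`:
a `K`-algebra with a basis indexed by the paths of `G`, multiplying by concatenation. -/
structure PathAlgebraOn (K : Type) [Field K] (G : DGraph) (A : Type)
    [NonUnitalRing A] [Module K A] where
  basis : Module.Basis (GPath G) K A
  mul_comp : ∀ (p q : GPath G) (h : p.rng = q.src),
      basis p * basis q = basis (p.comp q h)
  mul_ncomp : ∀ p q : GPath G, p.rng ≠ q.src → basis p * basis q = 0

/-- A `K`-subspace of `A` which is a left ideal. -/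
def IsLeftIdeal (K : Type) [Field K] (A : Type) [NonUnitalRing A] [Module K A]
    (S : Submodule K A) : Prop :=
  ∀ a : A, ∀ x ∈ S, a * x ∈ S

/-- A `K`-subspace of `A` which is a right ideal. -/
def IsRightIdeal (K : Type) [Field K] (A : Type) [NonUnitalRing A] [Module K A]
    (S : Submodule K A) : Prop :=
  ∀ a : A, ∀ x ∈ S, x * a ∈ S

/-- The descending chain condition on left ideals. -/
def IsLeftArtinianAlg (K : Type) [Field K] (A : Type) [NonUnitalRing A] [Module K A] : Prop :=
  ∀ f : ℕ → Submodule K A, (∀ m, IsLeftIdeal K A (f m)) → (∀ m, f (m + 1) ≤ f m) →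
    ∃ m, ∀ l, m ≤ l → f l = f m

/-- The ascending chain condition on left ideals. -/
def IsLeftNoetherianAlg (K : Type) [Field K] (A : Type) [NonUnitalRing A] [Module K A] : Prop :=
  ∀ f : ℕ → Submodule K A, (∀ m, IsLeftIdeal K A (f m)) → (∀ m, f m ≤ f (m + 1)) →
    ∃ m, ∀ l, m ≤ l → f l = f m

/-- A minimal left ideal: nonzero, and containing no nonzero proper left subideal. -/
def IsMinimalLeftIdeal (K : Type) [Field K] (A : Type) [NonUnitalRing A] [Module K A]
    (S : Submodule K A) : Prop :=
  IsLeftIdeal K A S ∧ S ≠ ⊥ ∧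
    ∀ T : Submodule K A, IsLeftIdeal K A T → T ≤ S → T = ⊥ ∨ T = S

/-- A minimal right ideal. -/
def IsMinimalRightIdeal (K : Type) [Field K] (A : Type) [NonUnitalRing A] [Module K A]
    (S : Submodule K A) : Prop :=
  IsRightIdeal K A S ∧ S ≠ ⊥ ∧
    ∀ T : Submodule K A, IsRightIdeal K A T → T ≤ S → T = ⊥ ∨ T = S

/-
Filter `KE` by path length: `L n` is spanned by the paths of length at least `n`; it is a
two-sided ideal and `⋂ L n = 0`. A minimal left ideal `S` meets each `L n` in `0` or `S`, so
`S ⊆ L N` and `S ∩ L (N + 1) = 0` for some `N`. For an edge `e` and `x ∈ S` this forces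
`e * x = 0`, and since `q ↦ e q` is injective, every path in the support of `x` starts at a
vertex which is the range of no edge, i.e. at a source. Conversely, if `p` starts at a source
then the only path that can be prepended to `p` is the trivial one, so `K p` is a minimal left
ideal. Right ideals and sinks are symmetric. Finally, the span of the paths starting at sources
is closed under multiplication on both sides, and each such path `p` equals `src p * p`, so this
span is the two-sided ideal generated by the sources.
-/

namespace DGraph

def IsSource (G : DGraph) (v : G.V) : Prop := ∀ e : G.Edge, G.r e ≠ v

def IsSink (G : DGraph) (v : G.V) : Prop := ∀ e : G.Edge, G.s e ≠ v

namespace GPath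

variable {G : DGraph}

def edges : GPath G → List G.Edge
  | Sum.inl _ => []
  | Sum.inr l => l.1

theorem ext_src_edges {p q : GPath G} (hs : p.src = q.src) (he : p.edges = q.edges) :
    p = q := by
  rcases p with v | ⟨l, hl⟩ <;> rcases q with w | ⟨m, hm⟩
  · exact congrArg Sum.inl hs
  · exact absurd he.symm hm.1
  · exact absurd he hl.1
  · exact congrArg Sum.inr (Subtype.ext he)

theorem length_eq_length_edges (p : GPath G) : p.length = p.edges.length := by
  rcases p with v | l <;> rfl

theorem edges_comp (p q : GPath G) (h : p.rng = q.src) :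
    (p.comp q h).edges = p.edges ++ q.edges := by
  rcases p with v | l <;> rcases q with w | m <;> simp [comp, edges]

theorem length_comp (p q : GPath G) (h : p.rng = q.src) :
    (p.comp q h).length = p.length + q.length := by
  simp only [length_eq_length_edges, edges_comp, List.length_append]

theorem src_comp (p q : GPath G) (h : p.rng = q.src) : (p.comp q h).src = p.src := by
  rcases p with v | l
  · exact h.symm
  · rcases q with w | m
    · rfl
    · exact congrArg G.s (List.head_append_of_ne_nil l.2.1)

theorem rng_comp (p q : GPath G) (h : p.rng = q.src) : (p.comp q h).rng = q.rng := by
  rcases p with v | l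
  · rfl
  · rcases q with w | m
    · exact h
    · exact congrArg G.r (List.getLast_append_of_ne_nil _ m.2.1)

theorem comp_left_cancel {p q q' : GPath G} {h : p.rng = q.src} {h' : p.rng = q'.src}
    (hc : p.comp q h = p.comp q' h') : q = q' := by
  refine ext_src_edges (h.symm.trans h') (List.append_cancel_left (as := p.edges) ?_)
  rw [← edges_comp p q h, ← edges_comp p q' h', hc]

theorem comp_right_cancel {p p' q : GPath G} {h : p.rng = q.src} {h' : p'.rng = q.src}
    (hc : p.comp q h = p'.comp q h') : p = p' := by
  refine ext_src_edges ?_ (List.append_cancel_right (bs := q.edges) ?_)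
  · rw [← src_comp p q h, ← src_comp p' q h', hc]
  · rw [← edges_comp p q h, ← edges_comp p' q h', hc]

theorem comp_ofVertex (p : GPath G) (v : G.V) (h : p.rng = (ofVertex v).src) :
    p.comp (ofVertex v) h = p := by
  rcases p with w | l
  · exact congrArg Sum.inl h.symm
  · rfl

theorem comp_eq_right_of_isSource {p q : GPath G} (h : p.rng = q.src)
    (hq : G.IsSource q.src) : p.comp q h = q := by
  rcases p with v | l
  · rfl
  · exact absurd h (hq _)

theorem comp_eq_left_of_isSink {p q : GPath G} (h : p.rng = q.src)
    (hp : G.IsSink p.rng) : p.comp q h = p := by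
  rcases q with w | m
  · exact comp_ofVertex p w h
  · exact absurd h.symm (hp _)

end GPath

end DGraph

open DGraph GPath Submodule

section

variable {K A : Type} [Field K] [NonUnitalRing A] [Module K A]

theorem coe_span_eq_twoSidedIdeal_span {s T : Set A} (hl : IsLeftIdeal K A (span K s))
    (hr : IsRightIdeal K A (span K s)) (hT : T ⊆ span K s)
    (hs : ∀ a ∈ s, ∀ k : K, k • a ∈ TwoSidedIdeal.span T) :
    (span K s : Set A) = TwoSidedIdeal.span T := by
  ext x
  constructor
  · intro hx
    -- a two-sided ideal need not be closed under `K`, so carry all scalar multiples along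
    have hsmul : ∀ k : K, k • x ∈ TwoSidedIdeal.span T := by
      induction hx using span_induction with
      | mem a ha => exact hs a ha
      | zero => simp
      | add a b _ _ ha hb => intro k; rw [smul_add]; exact add_mem (ha k) (hb k)
      | smul c a _ ha => intro k; rw [smul_smul]; exact ha (k * c)
    simpa using hsmul 1
  · intro hx
    let I : TwoSidedIdeal A := .mk' (span K s) (zero_mem _) add_mem neg_mem
      (fun hy => hl _ _ hy) (fun hx => hr _ _ hx)
    have hTI : T ⊆ I := fun t ht => (TwoSidedIdeal.mem_mk' ..).mpr (hT ht)
    exact (TwoSidedIdeal.mem_mk' ..).mp (TwoSidedIdeal.mem_span_iff.mp hx I hTI)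

theorem IsMinimalLeftIdeal.inf_eq_bot_or_eq {S T : Submodule K A}
    (hS : IsMinimalLeftIdeal K A S) (hT : IsLeftIdeal K A T) : S ⊓ T = ⊥ ∨ S ⊓ T = S :=
  hS.2.2 _ (fun a x hx => ⟨hS.1 a x hx.1, hT a x hx.2⟩) inf_le_left

theorem IsMinimalRightIdeal.inf_eq_bot_or_eq {S T : Submodule K A}
    (hS : IsMinimalRightIdeal K A S) (hT : IsRightIdeal K A T) : S ⊓ T = ⊥ ∨ S ⊓ T = S :=
  hS.2.2 _ (fun a x hx => ⟨hS.1 a x hx.1, hT a x hx.2⟩) inf_le_left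

theorem isMinimalLeftIdeal_span_singleton {b : A} (hb : b ≠ 0)
    (hl : IsLeftIdeal K A (K ∙ b)) : IsMinimalLeftIdeal K A (K ∙ b) :=
  ⟨hl, (nonzero_span_atom b hb).1, fun _ _ hT => (nonzero_span_atom b hb).le_iff.mp hT⟩

theorem isMinimalRightIdeal_span_singleton {b : A} (hb : b ≠ 0)
    (hr : IsRightIdeal K A (K ∙ b)) : IsMinimalRightIdeal K A (K ∙ b) :=
  ⟨hr, (nonzero_span_atom b hb).1, fun _ _ hT => (nonzero_span_atom b hb).le_iff.mp hT⟩

variable [SMulCommClass K A A] [IsScalarTower K A A]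

theorem mul_mem_of_mem_span {s t : Set A} {N : Submodule K A}
    (h : ∀ a ∈ s, ∀ b ∈ t, a * b ∈ N) {x y : A} (hx : x ∈ span K s)
    (hy : y ∈ span K t) : x * y ∈ N := by
  have hst : map₂ (LinearMap.mul K A) (span K s) (span K t) ≤ N := by
    rw [map₂_span_span, span_le]
    rintro _ ⟨a, ha, b, hb, rfl⟩
    exact h a ha b hb
  exact hst (apply_mem_map₂ _ hx hy)

end

namespace PathAlgebraOn

variable {K : Type} [Field K] {G : DGraph} {A : Type} [NonUnitalRing A] [Module K A]
  (PA : PathAlgebraOn K G A)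

theorem basis_mul_basis_mem {N : Submodule K A} {p q : GPath G}
    (h : ∀ hpq : p.rng = q.src, PA.basis (p.comp q hpq) ∈ N) :
    PA.basis p * PA.basis q ∈ N := by
  by_cases hpq : p.rng = q.src
  · rw [PA.mul_comp p q hpq]; exact h hpq
  · rw [PA.mul_ncomp p q hpq]; exact N.zero_mem

theorem basis_ofVertex_src_mul (p : GPath G) :
    PA.basis (ofVertex p.src) * PA.basis p = PA.basis p :=
  PA.mul_comp _ _ rfl

theorem basis_mul_basis_ofVertex_rng (p : GPath G) :
    PA.basis p * PA.basis (ofVertex p.rng) = PA.basis p :=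
  (PA.mul_comp _ _ rfl).trans (congrArg PA.basis (comp_ofVertex _ _ _))

theorem repr_basis_mul_apply_comp [SMulCommClass K A A] (a : GPath G) (x : A) {p : GPath G}
    (h : a.rng = p.src) :
    PA.basis.repr (PA.basis a * x) (a.comp p h) = PA.basis.repr x p := by
  let lhs : A →ₗ[K] K :=
    Finsupp.lapply (a.comp p h) ∘ₗ PA.basis.repr.toLinearMap ∘ₗ
      LinearMap.mulLeft K (PA.basis a)
  let rhs : A →ₗ[K] K := Finsupp.lapply p ∘ₗ PA.basis.repr.toLinearMap
  classical
  refine LinearMap.congr_fun (PA.basis.ext (f₁ := lhs) (f₂ := rhs) fun q => ?_) x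
  simp only [lhs, rhs, LinearMap.comp_apply, LinearMap.mulLeft_apply, LinearEquiv.coe_coe,
    Finsupp.lapply_apply, PA.basis.repr_self]
  by_cases haq : a.rng = q.src
  · rw [PA.mul_comp a q haq, PA.basis.repr_self, Finsupp.single_apply, Finsupp.single_apply]
    exact if_congr ⟨comp_left_cancel, fun hqp => by subst hqp; rfl⟩ rfl rfl
  · rw [PA.mul_ncomp a q haq, map_zero, Finsupp.zero_apply, Finsupp.single_eq_of_ne]
    rintro rfl
    exact haq h

theorem repr_mul_basis_apply_comp [IsScalarTower K A A] (a : GPath G) (x : A) {p : GPath G}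
    (h : p.rng = a.src) :
    PA.basis.repr (x * PA.basis a) (p.comp a h) = PA.basis.repr x p := by
  let lhs : A →ₗ[K] K :=
    Finsupp.lapply (p.comp a h) ∘ₗ PA.basis.repr.toLinearMap ∘ₗ
      LinearMap.mulRight K (PA.basis a)
  let rhs : A →ₗ[K] K := Finsupp.lapply p ∘ₗ PA.basis.repr.toLinearMap
  classical
  refine LinearMap.congr_fun (PA.basis.ext (f₁ := lhs) (f₂ := rhs) fun q => ?_) x
  simp only [lhs, rhs, LinearMap.comp_apply, LinearMap.mulRight_apply, LinearEquiv.coe_coe,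
    Finsupp.lapply_apply, PA.basis.repr_self]
  by_cases hqa : q.rng = a.src
  · rw [PA.mul_comp q a hqa, PA.basis.repr_self, Finsupp.single_apply, Finsupp.single_apply]
    exact if_congr ⟨comp_right_cancel, fun hqp => by subst hqp; rfl⟩ rfl rfl
  · rw [PA.mul_ncomp q a hqa, map_zero, Finsupp.zero_apply, Finsupp.single_eq_of_ne]
    rintro rfl
    exact hqa h

def lengthFiltration (n : ℕ) : Submodule K A :=
  span K (PA.basis '' {p | n ≤ p.length})

theorem lengthFiltration_zero : PA.lengthFiltration 0 = ⊤ := by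
  simp only [lengthFiltration, zero_le, Set.ofPred_true, Set.image_univ, PA.basis.span_eq]

theorem eq_zero_of_forall_mem_lengthFiltration {x : A}
    (hx : ∀ n, x ∈ PA.lengthFiltration n) : x = 0 := by
  refine PA.basis.repr.map_eq_zero_iff.mp (Finsupp.ext fun p => ?_)
  by_contra hp
  have := PA.basis.mem_span_image.mp (hx (p.length + 1)) (Finsupp.mem_support_iff.mpr hp)
  simp at this

theorem exists_le_lengthFiltration_inf_eq_bot {S : Submodule K A} (hS : S ≠ ⊥)
    (hdich : ∀ n, S ⊓ PA.lengthFiltration n = ⊥ ∨ S ⊓ PA.lengthFiltration n = S) :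
    ∃ N, S ≤ PA.lengthFiltration N ∧ S ⊓ PA.lengthFiltration (N + 1) = ⊥ := by
  by_contra! h
  have hle : ∀ n, S ≤ PA.lengthFiltration n := by
    intro n
    induction n with
    | zero => simp [lengthFiltration_zero]
    | succ n ih => exact inf_eq_left.mp ((hdich (n + 1)).resolve_left (h n ih))
  exact hS (eq_bot_iff.mpr fun x hx =>
    PA.eq_zero_of_forall_mem_lengthFiltration fun n => hle n hx)

variable [SMulCommClass K A A] [IsScalarTower K A A]

theorem isLeftIdeal_span {s : Set (GPath G)}
    (hs : ∀ (p q : GPath G) h, q ∈ s → p.comp q h ∈ s) :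
    IsLeftIdeal K A (span K (PA.basis '' s)) := by
  intro a x hx
  refine mul_mem_of_mem_span ?_ (PA.basis.mem_span a) hx
  rintro _ ⟨p, rfl⟩ _ ⟨q, hq, rfl⟩
  exact PA.basis_mul_basis_mem fun h => subset_span ⟨_, hs p q h hq, rfl⟩

theorem isRightIdeal_span {s : Set (GPath G)}
    (hs : ∀ (p q : GPath G) h, p ∈ s → p.comp q h ∈ s) :
    IsRightIdeal K A (span K (PA.basis '' s)) := by
  intro a x hx
  refine mul_mem_of_mem_span ?_ hx (PA.basis.mem_span a)
  rintro _ ⟨p, hp, rfl⟩ _ ⟨q, rfl⟩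
  exact PA.basis_mul_basis_mem fun h => subset_span ⟨_, hs p q h hp, rfl⟩

theorem mul_mem_lengthFiltration {m n : ℕ} {x y : A} (hx : x ∈ PA.lengthFiltration m)
    (hy : y ∈ PA.lengthFiltration n) : x * y ∈ PA.lengthFiltration (m + n) := by
  refine mul_mem_of_mem_span ?_ hx hy
  rintro _ ⟨p, hp, rfl⟩ _ ⟨q, hq, rfl⟩
  refine PA.basis_mul_basis_mem fun h => subset_span ⟨_, ?_, rfl⟩
  simp only [Set.mem_ofPred_eq, length_comp] at hp hq ⊢
  omega

theorem isLeftIdeal_lengthFiltration (n : ℕ) : IsLeftIdeal K A (PA.lengthFiltration n) :=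
  fun a _ hx => by
    have ha : a ∈ PA.lengthFiltration 0 := PA.lengthFiltration_zero ▸ mem_top
    simpa only [zero_add] using PA.mul_mem_lengthFiltration ha hx

theorem isRightIdeal_lengthFiltration (n : ℕ) : IsRightIdeal K A (PA.lengthFiltration n) :=
  fun a _ hx => by
    have ha : a ∈ PA.lengthFiltration 0 := PA.lengthFiltration_zero ▸ mem_top
    simpa only [add_zero] using PA.mul_mem_lengthFiltration hx ha

theorem le_span_isSource_of_isMinimalLeftIdeal {S : Submodule K A}
    (hS : IsMinimalLeftIdeal K A S) : S ≤ span K (PA.basis '' {p | G.IsSource p.src}) := by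
  obtain ⟨N, hSN, hSN1⟩ := PA.exists_le_lengthFiltration_inf_eq_bot hS.2.1
    fun n => hS.inf_eq_bot_or_eq (PA.isLeftIdeal_lengthFiltration n)
  intro x hx
  refine PA.basis.mem_span_image.mpr fun p hp e he => Finsupp.mem_support_iff.mp hp ?_
  have hedge : PA.basis (ofEdge e) * x ∈ S ⊓ PA.lengthFiltration (N + 1) := by
    refine ⟨hS.1 _ x hx, add_comm N 1 ▸ PA.mul_mem_lengthFiltration ?_ (hSN hx)⟩
    exact subset_span ⟨ofEdge e, Nat.le_refl 1, rfl⟩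
  rw [hSN1, mem_bot] at hedge
  rw [← PA.repr_basis_mul_apply_comp (ofEdge e) x he, hedge, map_zero, Finsupp.zero_apply]

theorem le_span_isSink_of_isMinimalRightIdeal {S : Submodule K A}
    (hS : IsMinimalRightIdeal K A S) : S ≤ span K (PA.basis '' {p | G.IsSink p.rng}) := by
  obtain ⟨N, hSN, hSN1⟩ := PA.exists_le_lengthFiltration_inf_eq_bot hS.2.1
    fun n => hS.inf_eq_bot_or_eq (PA.isRightIdeal_lengthFiltration n)
  intro x hx
  refine PA.basis.mem_span_image.mpr fun p hp e he => Finsupp.mem_support_iff.mp hp ?_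
  have hedge : x * PA.basis (ofEdge e) ∈ S ⊓ PA.lengthFiltration (N + 1) := by
    refine ⟨hS.1 _ x hx, PA.mul_mem_lengthFiltration (hSN hx) ?_⟩
    exact subset_span ⟨ofEdge e, Nat.le_refl 1, rfl⟩
  rw [hSN1, mem_bot] at hedge
  rw [← PA.repr_mul_basis_apply_comp (ofEdge e) x he.symm, hedge, map_zero, Finsupp.zero_apply]

theorem isMinimalLeftIdeal_span_basis {p : GPath G} (hp : G.IsSource p.src) :
    IsMinimalLeftIdeal K A (K ∙ PA.basis p) := by
  refine isMinimalLeftIdeal_span_singleton (PA.basis.ne_zero p) ?_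
  rw [← Set.image_singleton]
  exact PA.isLeftIdeal_span fun q p' h hp' => by
    rw [Set.mem_singleton_iff] at hp' ⊢
    subst hp'
    exact comp_eq_right_of_isSource h hp

theorem isMinimalRightIdeal_span_basis {p : GPath G} (hp : G.IsSink p.rng) :
    IsMinimalRightIdeal K A (K ∙ PA.basis p) := by
  refine isMinimalRightIdeal_span_singleton (PA.basis.ne_zero p) ?_
  rw [← Set.image_singleton]
  exact PA.isRightIdeal_span fun p' q h hp' => by
    rw [Set.mem_singleton_iff] at hp' ⊢
    subst hp'
    exact comp_eq_left_of_isSink h hp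

theorem sSup_isMinimalLeftIdeal :
    sSup {S | IsMinimalLeftIdeal K A S} = span K (PA.basis '' {p | G.IsSource p.src}) := by
  refine le_antisymm (sSup_le fun S hS => PA.le_span_isSource_of_isMinimalLeftIdeal hS) ?_
  rw [span_le]
  rintro _ ⟨p, hp, rfl⟩
  exact mem_sSup_of_mem (PA.isMinimalLeftIdeal_span_basis hp) (mem_span_singleton_self _)

theorem sSup_isMinimalRightIdeal :
    sSup {S | IsMinimalRightIdeal K A S} = span K (PA.basis '' {p | G.IsSink p.rng}) := by
  refine le_antisymm (sSup_le fun S hS => PA.le_span_isSink_of_isMinimalRightIdeal hS) ?_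
  rw [span_le]
  rintro _ ⟨p, hp, rfl⟩
  exact mem_sSup_of_mem (PA.isMinimalRightIdeal_span_basis hp) (mem_span_singleton_self _)

theorem coe_span_isSource :
    (span K (PA.basis '' {p | G.IsSource p.src}) : Set A) =
      TwoSidedIdeal.span {x | ∃ v, G.IsSource v ∧ x = PA.basis (ofVertex v)} := by
  refine coe_span_eq_twoSidedIdeal_span (PA.isLeftIdeal_span ?_) (PA.isRightIdeal_span ?_) ?_ ?_
  · intro q p h hp
    rwa [Set.mem_ofPred_eq, comp_eq_right_of_isSource h hp]
  · intro p q h hp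
    rwa [Set.mem_ofPred_eq, src_comp]
  · rintro _ ⟨v, hv, rfl⟩
    exact subset_span ⟨ofVertex v, hv, rfl⟩
  · rintro _ ⟨p, hp, rfl⟩ k
    rw [← PA.basis_ofVertex_src_mul p, ← mul_smul_comm]
    exact TwoSidedIdeal.mul_mem_right _ _ _ (TwoSidedIdeal.subset_span ⟨p.src, hp, rfl⟩)

theorem coe_span_isSink :
    (span K (PA.basis '' {p | G.IsSink p.rng}) : Set A) =
      TwoSidedIdeal.span {x | ∃ v, G.IsSink v ∧ x = PA.basis (ofVertex v)} := by
  refine coe_span_eq_twoSidedIdeal_span (PA.isLeftIdeal_span ?_) (PA.isRightIdeal_span ?_) ?_ ?_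
  · intro q p h hp
    rwa [Set.mem_ofPred_eq, rng_comp]
  · intro p q h hp
    rwa [Set.mem_ofPred_eq, comp_eq_left_of_isSink h hp]
  · rintro _ ⟨v, hv, rfl⟩
    exact subset_span ⟨ofVertex v, hv, rfl⟩
  · rintro _ ⟨p, hp, rfl⟩ k
    rw [← PA.basis_mul_basis_ofVertex_rng p, ← smul_mul_assoc]
    exact TwoSidedIdeal.mul_mem_left _ _ _ (TwoSidedIdeal.subset_span ⟨p.rng, hp, rfl⟩)

end PathAlgebraOn

/-- the left socle of `KE` is the span of the paths starting at sources
(the two-sided ideal generated by the sources), and the right socle is the span of the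
paths ending at sinks (the two-sided ideal generated by the sinks). -/
theorem stmt11 (K : Type) [Field K] (G : DGraph)
    (A : Type) [NonUnitalRing A] [Module K A] [SMulCommClass K A A] [IsScalarTower K A A]
    (PA : PathAlgebraOn K G A) :
    (sSup {S : Submodule K A | IsMinimalLeftIdeal K A S} =
      Submodule.span K (PA.basis '' {p : GPath G | ∀ e : G.Edge, G.r e ≠ p.src})) ∧
    (((sSup {S : Submodule K A | IsMinimalLeftIdeal K A S} : Submodule K A) : Set A) =
      (TwoSidedIdeal.span {x : A | ∃ v : G.V, (∀ e : G.Edge, G.r e ≠ v) ∧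
        x = PA.basis (GPath.ofVertex v)} : TwoSidedIdeal A)) ∧
    (sSup {S : Submodule K A | IsMinimalRightIdeal K A S} =
      Submodule.span K (PA.basis '' {p : GPath G | ∀ e : G.Edge, G.s e ≠ p.rng})) ∧
    (((sSup {S : Submodule K A | IsMinimalRightIdeal K A S} : Submodule K A) : Set A) =
      (TwoSidedIdeal.span {x : A | ∃ v : G.V, (∀ e : G.Edge, G.s e ≠ v) ∧
        x = PA.basis (GPath.ofVertex v)} : TwoSidedIdeal A)) := by
  refine ⟨PA.sSup_isMinimalLeftIdeal, ?_, PA.sSup_isMinimalRightIdeal, ?_⟩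
  · rw [PA.sSup_isMinimalLeftIdeal]
    exact PA.coe_span_isSource
  · rw [PA.sSup_isMinimalRightIdeal]
    exact PA.coe_span_isSink
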